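/- arXiv:1110.1781 — 4 statements merged into one kernel-verified Lean document; each statement's English description precedes it below -/
import Mathlib

section
/- Under the crowdsourcing model with independent answers and initial weights of mean 1, the mean of the first-iteration user weight is E[y^{(1)}_{a→i}] = (2p_a - 1) · Σ_{j ∈ ∂⁻¹a\{i}} Σ_{b ∈ ∂j\{a}} (2p_b - 1). -/
open MeasureTheory ProbabilityTheory

/-!
By linearity the mean is the sum of the means of the terms `A j a * A j b * y0 b j`. For
`b ≠ a` these are three distinct members of the independent family, so each mean factorises as
`E[A j a] E[A j b] E[y0 b j] = z_j (2 p_a - 1) · z_j (2 p_b - 1) · 1`, and `z_j² = 1`.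
The mean of a `±c`-valued variable is read off the indicator of `{X = c}`:
`X = c (2 · 1_{X = c} - 1)`.
-/

namespace MeasureTheory

variable {Ω : Type*} [MeasurableSpace Ω] {μ : Measure Ω} {X : Ω → ℝ} {c : ℝ}

lemma integral_finset_sum_sum {α β : Type*} {s : Finset α} {t : α → Finset β}
    {F : α → β → Ω → ℝ} (hF : ∀ x ∈ s, ∀ y ∈ t x, Integrable (F x y) μ) :
    ∫ ω, ∑ x ∈ s, ∑ y ∈ t x, F x y ω ∂μ = ∑ x ∈ s, ∑ y ∈ t x, ∫ ω, F x y ω ∂μ := by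
  rw [integral_finsetSum _ fun x hx => integrable_finsetSum _ (hF x hx)]
  exact Finset.sum_congr rfl fun x hx => integral_finsetSum _ (hF x hx)

lemma integrable_of_forall_eq_or_eq_neg [IsFiniteMeasure μ] (hX : Measurable X)
    (hval : ∀ ω, X ω = c ∨ X ω = -c) : Integrable X μ :=
  .of_bound hX.aestronglyMeasurable |c| <| ae_of_all _ fun ω => by
    rcases hval ω with h | h <;> simp [h]

lemma integral_of_forall_eq_or_eq_neg [IsProbabilityMeasure μ] (hX : Measurable X)
    (hval : ∀ ω, X ω = c ∨ X ω = -c) :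
    ∫ ω, X ω ∂μ = c * (2 * μ.real {ω | X ω = c} - 1) := by
  set s := {ω | X ω = c}
  have hs : MeasurableSet s := hX (measurableSet_singleton c)
  have hrep : ∀ ω, X ω = c * (2 * s.indicator 1 ω - 1) := by
    intro ω
    by_cases hω : ω ∈ s
    · simp only [Set.indicator_of_mem hω, show X ω = c from hω, Pi.one_apply]
      ring
    · rcases hval ω with h | h
      · exact absurd h hω
      · simp [Set.indicator_of_notMem hω, h]
  simp_rw [hrep, integral_const_mul]
  rw [integral_sub ((integrable_const 1).indicator hs |>.const_mul 2) (integrable_const 1),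
    integral_const_mul, integral_indicator_one hs]
  simp

end MeasureTheory

namespace ProbabilityTheory

variable {Ω ι : Type*} [MeasurableSpace Ω] {μ : Measure Ω} {f : ι → Ω → ℝ} {i j k : ι}

lemma iIndepFun.integrable_mul_mul (hf : iIndepFun f μ) (hmeas : ∀ l, AEMeasurable (f l) μ)
    (hij : i ≠ j) (hik : i ≠ k) (hjk : j ≠ k)
    (hi : Integrable (f i) μ) (hj : Integrable (f j) μ) (hk : Integrable (f k) μ) :
    Integrable (fun ω => f i ω * f j ω * f k ω) μ :=
  (hf.indepFun_mul_left₀ hmeas i j k hik hjk).integrable_mul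
    ((hf.indepFun hij).integrable_mul hi hj) hk

lemma iIndepFun.integral_mul_mul (hf : iIndepFun f μ) (hmeas : ∀ l, AEMeasurable (f l) μ)
    (hij : i ≠ j) (hik : i ≠ k) (hjk : j ≠ k) :
    ∫ ω, f i ω * f j ω * f k ω ∂μ = (∫ ω, f i ω ∂μ) * (∫ ω, f j ω ∂μ) * ∫ ω, f k ω ∂μ := by
  have hij_k := (hf.indepFun_mul_left₀ hmeas i j k hik hjk).integral_fun_mul_eq_mul_integral
    ((hmeas i).mul (hmeas j)).aestronglyMeasurable (hmeas k).aestronglyMeasurable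
  simp only [Pi.mul_apply] at hij_k
  rw [hij_k, (hf.indepFun hij).integral_fun_mul_eq_mul_integral
    (hmeas i).aestronglyMeasurable (hmeas j).aestronglyMeasurable]

end ProbabilityTheory

theorem first_iteration_weight_mean_general
    {Ω U Q : Type*} [MeasureSpace Ω] [IsProbabilityMeasure (ℙ : Measure Ω)]
    [DecidableEq U] [DecidableEq Q]
    (adj : Q → Finset U) (inv : U → Finset Q)
    (hbip : ∀ (a : U) (j : Q), a ∈ adj j ↔ j ∈ inv a)
    (z : Q → ℝ) (hz : ∀ j, z j = 1 ∨ z j = -1)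
    (p : U → ℝ) (hp : ∀ b, p b ∈ Set.Icc (0 : ℝ) 1)
    (A : Q → U → Ω → ℝ) (y0 : U → Q → Ω → ℝ)
    (hAmeas : ∀ j b, b ∈ adj j → Measurable (A j b))
    (hAval : ∀ j b, b ∈ adj j → ∀ ω, A j b ω = z j ∨ A j b ω = -z j)
    (hAdist : ∀ j b, b ∈ adj j → ℙ {ω | A j b ω = z j} = ENNReal.ofReal (p b))
    (hy0int : ∀ b j, j ∈ inv b → Integrable (y0 b j) ℙ)
    (hy0mean : ∀ b j, j ∈ inv b → ∫ ω, y0 b j ω = 1)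
    (hindep : iIndepFun
      (Sum.elim (fun e : {x : Q × U // x.2 ∈ adj x.1} => A e.1.1 e.1.2)
                (fun e : {x : U × Q // x.2 ∈ inv x.1} => y0 e.1.1 e.1.2)) ℙ)
    (a : U) (i : Q) :
    (∫ ω, ∑ j ∈ (inv a).erase i, ∑ b ∈ (adj j).erase a,
        A j a ω * A j b ω * y0 b j ω)
      = (2 * p a - 1) *
          ∑ j ∈ (inv a).erase i, ∑ b ∈ (adj j).erase a, (2 * p b - 1) := by
  let E := {x : Q × U // x.2 ∈ adj x.1} ⊕ {x : U × Q // x.2 ∈ inv x.1}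
  have hmeas : ∀ e : E, AEMeasurable
      (Sum.elim (fun e : {x : Q × U // x.2 ∈ adj x.1} => A e.1.1 e.1.2)
        (fun e : {x : U × Q // x.2 ∈ inv x.1} => y0 e.1.1 e.1.2) e) ℙ := by
    rintro (⟨⟨j, b⟩, h⟩ | ⟨⟨b, j⟩, h⟩)
    exacts [(hAmeas j b h).aemeasurable, (hy0int b j h).aemeasurable]
  have hAint : ∀ j b, b ∈ adj j → Integrable (A j b) ℙ := fun j b h =>
    integrable_of_forall_eq_or_eq_neg (hAmeas j b h) (hAval j b h)
  have hAmean : ∀ j b, b ∈ adj j → ∫ ω, A j b ω = z j * (2 * p b - 1) := by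
    intro j b h
    rw [integral_of_forall_eq_or_eq_neg (hAmeas j b h) (hAval j b h), measureReal_def,
      hAdist j b h, ENNReal.toReal_ofReal (hp b).1]
  have hterm : ∀ j ∈ (inv a).erase i, ∀ b ∈ (adj j).erase a,
      Integrable (fun ω => A j a ω * A j b ω * y0 b j ω) ℙ ∧
      ∫ ω, A j a ω * A j b ω * y0 b j ω = (2 * p a - 1) * (2 * p b - 1) := by
    intro j hj b hb
    obtain ⟨hba, hjb⟩ := Finset.mem_erase.1 hb
    have hja : a ∈ adj j := (hbip a j).2 (Finset.mem_of_mem_erase hj)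
    have hbj : j ∈ inv b := (hbip b j).1 hjb
    set ea : E := .inl ⟨(j, a), hja⟩
    set eb : E := .inl ⟨(j, b), hjb⟩
    set ey : E := .inr ⟨(b, j), hbj⟩
    have hab : ea ≠ eb := by simp [ea, eb, E, hba.symm]
    have hay : ea ≠ ey := by simp [ea, ey]
    have hby : eb ≠ ey := by simp [eb, ey]
    refine ⟨hindep.integrable_mul_mul hmeas hab hay hby (hAint j a hja) (hAint j b hjb)
      (hy0int b j hbj), ?_⟩
    have hsplit : ∫ ω, A j a ω * A j b ω * y0 b j ω
        = (∫ ω, A j a ω) * (∫ ω, A j b ω) * ∫ ω, y0 b j ω :=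
      hindep.integral_mul_mul hmeas hab hay hby
    rw [hsplit, hAmean j a hja, hAmean j b hjb, hy0mean b j hbj]
    have hz2 : z j * z j = 1 := by rcases hz j with h | h <;> simp [h]
    linear_combination (2 * p a - 1) * (2 * p b - 1) * hz2
  rw [integral_finset_sum_sum fun j hj b hb => (hterm j hj b hb).1, Finset.mul_sum]
  refine Finset.sum_congr rfl fun j hj => ?_
  rw [Finset.mul_sum]
  exact Finset.sum_congr rfl fun b hb => (hterm j hj b hb).2

/-- Mean of the first-iteration user weight in the crowdsourcing model:
`E[y¹_{a→i}] = (2p_a - 1) · Σ_{j ∈ ∂⁻¹a\{i}} Σ_{b ∈ ∂j\{a}} (2p_b - 1)`. -/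
theorem first_iteration_weight_mean
    {Ω U Q : Type*} [MeasureSpace Ω] [IsProbabilityMeasure (ℙ : Measure Ω)]
    [DecidableEq U] [DecidableEq Q]
    (adj : Q → Finset U) (inv : U → Finset Q)
    (hbip : ∀ (a : U) (j : Q), a ∈ adj j ↔ j ∈ inv a)
    (z : Q → ℝ) (hz : ∀ j, z j = 1 ∨ z j = -1)
    (p : U → ℝ) (hp : ∀ b, p b ∈ Set.Icc (0 : ℝ) 1)
    (A : Q → U → Ω → ℝ) (y0 : U → Q → Ω → ℝ)
    (hAmeas : ∀ j b, b ∈ adj j → Measurable (A j b))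
    (hy0meas : ∀ b j, j ∈ inv b → Measurable (y0 b j))
    (hAval : ∀ j b, b ∈ adj j → ∀ ω, A j b ω = z j ∨ A j b ω = -z j)
    (hAdist : ∀ j b, b ∈ adj j → ℙ {ω | A j b ω = z j} = ENNReal.ofReal (p b))
    (hy0int : ∀ b j, j ∈ inv b → Integrable (y0 b j) ℙ)
    (hy0mean : ∀ b j, j ∈ inv b → ∫ ω, y0 b j ω = 1)
    (hindep : iIndepFun
      (Sum.elim (fun e : {x : Q × U // x.2 ∈ adj x.1} => A e.1.1 e.1.2)
                (fun e : {x : U × Q // x.2 ∈ inv x.1} => y0 e.1.1 e.1.2)) ℙ)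
    (a : U) (i : Q) :
    (∫ ω, ∑ j ∈ (inv a).erase i, ∑ b ∈ (adj j).erase a,
        A j a ω * A j b ω * y0 b j ω)
      = (2 * p a - 1) *
          ∑ j ∈ (inv a).erase i, ∑ b ∈ (adj j).erase a, (2 * p b - 1) :=
  first_iteration_weight_mean_general adj inv hbip z hz p hp A y0 hAmeas hAval hAdist hy0int hy0mean
    hindep a i
end

section
/- Under the crowdsourcing model with independent answers and i.i.d. initial weights of mean 1 and variance 1, the variance of the first-iteration user weight is Var(y^{(1)}_{a→i}) = Σ_{j ∈ ∂⁻¹a\{i}} [ Σ_{b ∈ ∂j\{a}} (2 - (2p_b - 1)²) + (1 - (2p_a - 1)²) · ( Σ_{b ∈ ∂j\{a}} (2p_b - 1) )² ]. -/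
/-!
Write `y¹_{a→i} = Σ_j A_{ja} S_j` with `S_j = Σ_{b ∈ ∂j∖{a}} A_{jb} y⁰_{b→j}`. A function that is
measurable for the σ-algebra generated by the variables on one set of edges is independent of a
function of the variables on a disjoint set of edges, so the summands for distinct questions are
independent and their variances add, and likewise for the terms of `S_j`.
Both levels then rest on one identity: if `|X| = 1` and `X ⟂ Y`, then `(XY)² = Y²` and
`Var(XY) = Var Y + (1 - (E X)²)(E Y)²`. With `E A_{jb} = z_j(2p_b - 1)`, `z_j² = 1` and
`E y⁰ = Var y⁰ = 1` it gives `Var(A_{jb} y⁰_{b→j}) = 2 - (2p_b - 1)²`, and then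
`Var(A_{ja} S_j) = Var S_j + (1 - (2p_a - 1)²)(Σ_b (2p_b - 1))²`.
-/

open MeasureTheory ProbabilityTheory

theorem measurable_biSup_comap_of_mem {Ω ι : Type*} {β : ι → Type*}
    [mβ : ∀ i, MeasurableSpace (β i)] (f : ∀ i, Ω → β i) {S : Set ι} {k : ι} (hk : k ∈ S) :
    Measurable[⨆ i ∈ S, (mβ i).comap (f i)] (f k) :=
  Measurable.of_comap_le (le_iSup₂_of_le k hk le_rfl)

namespace MeasureTheory

variable {Ω : Type*} {mΩ : MeasurableSpace Ω} {μ : Measure Ω}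

theorem integral_eq_of_forall_eq_or_eq_neg [IsProbabilityMeasure μ] {A : Ω → ℝ} {c q : ℝ}
    (hA : Measurable A) (hval : ∀ ω, A ω = c ∨ A ω = -c) (hq : 0 ≤ q)
    (hdist : μ {ω | A ω = c} = ENNReal.ofReal q) :
    ∫ ω, A ω ∂μ = c * (2 * q - 1) := by
  set E := {ω | A ω = c}
  have hE : MeasurableSet E := hA (measurableSet_singleton c)
  have hrepr : A = fun ω => 2 * c * E.indicator 1 ω - c := by
    funext ω
    by_cases hω : ω ∈ E
    · rw [Set.indicator_of_mem hω, show A ω = c from hω]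
      simp only [Pi.one_apply]
      ring
    · rw [Set.indicator_of_notMem hω, (hval ω).resolve_left hω]
      ring
  have hint : Integrable (fun ω => 2 * c * E.indicator 1 ω) μ :=
    ((integrable_const (1 : ℝ)).indicator hE).const_mul _
  rw [hrepr, integral_sub hint (integrable_const c), integral_const_mul, integral_indicator_one hE,
    measureReal_def, hdist, ENNReal.toReal_ofReal hq, integral_const, probReal_univ, one_smul]
  ring

theorem MemLp.mul_left_of_abs_eq_one {p : ENNReal} {X Y : Ω → ℝ} (hY : MemLp Y p μ)
    (hX : AEStronglyMeasurable X μ) (hX1 : ∀ ω, |X ω| = 1) :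
    MemLp (fun ω => X ω * Y ω) p μ :=
  hY.congr_norm (hX.mul hY.1) (.of_forall fun ω => by simp [hX1])

end MeasureTheory

namespace ProbabilityTheory

variable {Ω : Type*} {mΩ : MeasurableSpace Ω} {μ : Measure Ω}

theorem iIndepFun.indepFun_of_measurable_biSup {ι γ δ : Type*} {β : ι → Type*}
    [mβ : ∀ i, MeasurableSpace (β i)] [MeasurableSpace γ] [MeasurableSpace δ]
    {f : ∀ i, Ω → β i} (hf : iIndepFun f μ) (hmeas : ∀ i, Measurable (f i))
    {S T : Set ι} (hST : Disjoint S T) {g : Ω → γ} {h : Ω → δ}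
    (hg : Measurable[⨆ i ∈ S, (mβ i).comap (f i)] g)
    (hh : Measurable[⨆ i ∈ T, (mβ i).comap (f i)] h) :
    IndepFun g h μ := by
  rw [IndepFun_iff_Indep]
  have hST_indep := indep_iSup_of_disjoint (fun i => (hmeas i).comap_le)
    ((iIndepFun_iff_iIndep _ _ _).1 hf) hST
  exact indep_of_indep_of_le_right (indep_of_indep_of_le_left hST_indep hg.comap_le)
    hh.comap_le

theorem IndepFun.variance_mul_of_abs_eq_one [IsProbabilityMeasure μ] {X Y : Ω → ℝ}
    (hXY : IndepFun X Y μ) (hX : AEStronglyMeasurable X μ) (hX1 : ∀ ω, |X ω| = 1)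
    (hY : MemLp Y 2 μ) :
    variance (fun ω => X ω * Y ω) μ
      = variance Y μ + (1 - (∫ ω, X ω ∂μ) ^ 2) * (∫ ω, Y ω ∂μ) ^ 2 := by
  have hmean : ∫ ω, X ω * Y ω ∂μ = (∫ ω, X ω ∂μ) * ∫ ω, Y ω ∂μ :=
    hXY.integral_mul_eq_mul_integral hX hY.1
  have hsq : (fun ω => X ω * Y ω) ^ 2 = Y ^ 2 := by
    funext ω
    simp only [Pi.pow_apply, mul_pow, ← sq_abs (X ω), hX1, one_pow, one_mul]
  rw [variance_eq_sub (hY.mul_left_of_abs_eq_one hX hX1), variance_eq_sub hY, hsq, hmean]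
  ring

end ProbabilityTheory

namespace Crowdsourcing

variable {Ω U Q : Type*}

abbrev Index (adj : Q → Finset U) (inv : U → Finset Q) : Type _ :=
  {x : Q × U // x.2 ∈ adj x.1} ⊕ {x : U × Q // x.2 ∈ inv x.1}

-- The weight `y0 b j` sits on the same edge `(j, b)` as the answer `A j b`.
def Index.edge {adj : Q → Finset U} {inv : U → Finset Q} : Index adj inv → Q × U :=
  Sum.elim Subtype.val fun e => e.1.swap

def randomVariable (adj : Q → Finset U) (inv : U → Finset Q) (A : Q → U → Ω → ℝ)
    (y0 : U → Q → Ω → ℝ) : Index adj inv → Ω → ℝ :=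
  Sum.elim (fun e => A e.1.1 e.1.2) (fun e => y0 e.1.1 e.1.2)

abbrev edgeSigma (adj : Q → Finset U) (inv : U → Finset Q) (A : Q → U → Ω → ℝ)
    (y0 : U → Q → Ω → ℝ) (E : Set (Q × U)) : MeasurableSpace Ω :=
  ⨆ k ∈ Index.edge ⁻¹' E, (borel ℝ).comap (randomVariable adj inv A y0 k)

def incomingSum [DecidableEq U] (adj : Q → Finset U) (A : Q → U → Ω → ℝ)
    (y0 : U → Q → Ω → ℝ) (a : U) (j : Q) : Ω → ℝ :=
  fun ω => ∑ b ∈ (adj j).erase a, A j b ω * y0 b j ω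

def questionTerm [DecidableEq U] (adj : Q → Finset U) (A : Q → U → Ω → ℝ)
    (y0 : U → Q → Ω → ℝ) (a : U) (j : Q) : Ω → ℝ :=
  fun ω => A j a ω * incomingSum adj A y0 a j ω

variable {adj : Q → Finset U} {inv : U → Finset Q} {A : Q → U → Ω → ℝ} {y0 : U → Q → Ω → ℝ}
  {E : Set (Q × U)} {a b : U} {j : Q}

theorem measurable_answer_edgeSigma (hb : b ∈ adj j) (hE : (j, b) ∈ E) :
    Measurable[edgeSigma adj inv A y0 E] (A j b) :=
  measurable_biSup_comap_of_mem (randomVariable adj inv A y0) (k := .inl ⟨(j, b), hb⟩) hE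

theorem measurable_weight_edgeSigma (hj : j ∈ inv b) (hE : (j, b) ∈ E) :
    Measurable[edgeSigma adj inv A y0 E] (y0 b j) :=
  measurable_biSup_comap_of_mem (randomVariable adj inv A y0) (k := .inr ⟨(b, j), hj⟩) hE

variable [MeasurableSpace Ω]

structure IsModel (μ : Measure Ω) (adj : Q → Finset U) (inv : U → Finset Q) (z : Q → ℝ)
    (p : U → ℝ) (A : Q → U → Ω → ℝ) (y0 : U → Q → Ω → ℝ) : Prop where
  mem_adj_iff : ∀ a j, a ∈ adj j ↔ j ∈ inv a
  sign : ∀ j, z j = 1 ∨ z j = -1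
  reliability_nonneg : ∀ b, 0 ≤ p b
  measurable_answer : ∀ j b, b ∈ adj j → Measurable (A j b)
  measurable_weight : ∀ b j, j ∈ inv b → Measurable (y0 b j)
  answer_eq : ∀ j b, b ∈ adj j → ∀ ω, A j b ω = z j ∨ A j b ω = -z j
  measure_answer_eq_sign : ∀ j b, b ∈ adj j → μ {ω | A j b ω = z j} = ENNReal.ofReal (p b)
  memLp_weight : ∀ b j, j ∈ inv b → MemLp (y0 b j) 2 μ
  integral_weight : ∀ b j, j ∈ inv b → ∫ ω, y0 b j ω ∂μ = 1
  variance_weight : ∀ b j, j ∈ inv b → variance (y0 b j) μ = 1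
  iIndepFun : iIndepFun (randomVariable adj inv A y0) μ

namespace IsModel

variable {μ : Measure Ω} {z : Q → ℝ} {p : U → ℝ}

theorem sign_sq (hM : IsModel μ adj inv z p A y0) (j : Q) : z j ^ 2 = 1 := by
  rcases hM.sign j with h | h <;> simp [h]

theorem abs_answer (hM : IsModel μ adj inv z p A y0) (hb : b ∈ adj j) (ω : Ω) :
    |A j b ω| = 1 := by
  rw [abs_eq_abs.2 (hM.answer_eq j b hb ω)]
  rcases hM.sign j with h | h <;> simp [h]

theorem measurable_randomVariable (hM : IsModel μ adj inv z p A y0) :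
    ∀ k, Measurable (randomVariable adj inv A y0 k)
  | .inl ⟨(j, b), hb⟩ => hM.measurable_answer j b hb
  | .inr ⟨(b, j), hj⟩ => hM.measurable_weight b j hj

theorem indepFun_of_disjoint (hM : IsModel μ adj inv z p A y0) {E' : Set (Q × U)}
    (hEE' : Disjoint E E') {g h : Ω → ℝ} (hg : Measurable[edgeSigma adj inv A y0 E] g)
    (hh : Measurable[edgeSigma adj inv A y0 E'] h) : IndepFun g h μ :=
  hM.iIndepFun.indepFun_of_measurable_biSup hM.measurable_randomVariable (hEE'.preimage _) hg hh

theorem indepFun_answer_weight (hM : IsModel μ adj inv z p A y0) (hb : b ∈ adj j) :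
    IndepFun (A j b) (y0 b j) μ :=
  hM.iIndepFun.indepFun (i := .inl ⟨(j, b), hb⟩) (j := .inr ⟨(b, j), (hM.mem_adj_iff b j).1 hb⟩)
    Sum.inl_ne_inr

theorem measurable_edgeTerm_edgeSigma (hM : IsModel μ adj inv z p A y0) (hb : b ∈ adj j)
    (hE : (j, b) ∈ E) : Measurable[edgeSigma adj inv A y0 E] (fun ω => A j b ω * y0 b j ω) :=
  (measurable_answer_edgeSigma hb hE).mul
    (measurable_weight_edgeSigma ((hM.mem_adj_iff b j).1 hb) hE)

theorem memLp_edgeTerm (hM : IsModel μ adj inv z p A y0) (hb : b ∈ adj j) :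
    MemLp (fun ω => A j b ω * y0 b j ω) 2 μ :=
  (hM.memLp_weight b j ((hM.mem_adj_iff b j).1 hb)).mul_left_of_abs_eq_one
    (hM.measurable_answer j b hb).aestronglyMeasurable (hM.abs_answer hb)

section

variable [IsProbabilityMeasure μ]

theorem integral_answer (hM : IsModel μ adj inv z p A y0) (hb : b ∈ adj j) :
    ∫ ω, A j b ω ∂μ = z j * (2 * p b - 1) :=
  integral_eq_of_forall_eq_or_eq_neg (hM.measurable_answer j b hb) (hM.answer_eq j b hb)
    (hM.reliability_nonneg b) (hM.measure_answer_eq_sign j b hb)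

theorem integral_edgeTerm (hM : IsModel μ adj inv z p A y0) (hb : b ∈ adj j) :
    ∫ ω, A j b ω * y0 b j ω ∂μ = z j * (2 * p b - 1) := by
  have hj := (hM.mem_adj_iff b j).1 hb
  rw [(hM.indepFun_answer_weight hb).integral_fun_mul_eq_mul_integral
      (hM.measurable_answer j b hb).aestronglyMeasurable (hM.memLp_weight b j hj).1,
    hM.integral_answer hb, hM.integral_weight b j hj, mul_one]

theorem variance_edgeTerm (hM : IsModel μ adj inv z p A y0) (hb : b ∈ adj j) :
    variance (fun ω => A j b ω * y0 b j ω) μ = 2 - (2 * p b - 1) ^ 2 := by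
  have hj := (hM.mem_adj_iff b j).1 hb
  rw [(hM.indepFun_answer_weight hb).variance_mul_of_abs_eq_one
      (hM.measurable_answer j b hb).aestronglyMeasurable (hM.abs_answer hb)
      (hM.memLp_weight b j hj),
    hM.variance_weight b j hj, hM.integral_weight b j hj, hM.integral_answer hb, mul_pow,
    hM.sign_sq]
  ring

end

variable [DecidableEq U]

theorem measurable_incomingSum_edgeSigma (hM : IsModel μ adj inv z p A y0)
    (hE : ∀ b ∈ (adj j).erase a, (j, b) ∈ E) :
    Measurable[edgeSigma adj inv A y0 E] (incomingSum adj A y0 a j) :=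
  Finset.measurable_sum _ fun b hb =>
    hM.measurable_edgeTerm_edgeSigma (Finset.mem_of_mem_erase hb) (hE b hb)

theorem memLp_incomingSum (hM : IsModel μ adj inv z p A y0) :
    MemLp (incomingSum adj A y0 a j) 2 μ :=
  memLp_finsetSum _ fun _ hb => hM.memLp_edgeTerm (Finset.mem_of_mem_erase hb)

theorem memLp_questionTerm (hM : IsModel μ adj inv z p A y0) (ha : a ∈ adj j) :
    MemLp (questionTerm adj A y0 a j) 2 μ :=
  hM.memLp_incomingSum.mul_left_of_abs_eq_one
    (hM.measurable_answer j a ha).aestronglyMeasurable (hM.abs_answer ha)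

theorem indepFun_questionTerm (hM : IsModel μ adj inv z p A y0) {j' : Q} (ha : a ∈ adj j)
    (ha' : a ∈ adj j') (hne : j ≠ j') :
    IndepFun (questionTerm adj A y0 a j) (questionTerm adj A y0 a j') μ := by
  refine hM.indepFun_of_disjoint (E := {e | e.1 = j}) (E' := {e | e.1 = j'})
    (Set.disjoint_left.2 fun e he he' => hne (he.symm.trans he')) ?_ ?_
  · exact (measurable_answer_edgeSigma (E := {e | e.1 = j}) ha rfl).mul
      (hM.measurable_incomingSum_edgeSigma fun _ _ => rfl)
  · exact (measurable_answer_edgeSigma (E := {e | e.1 = j'}) ha' rfl).mul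
      (hM.measurable_incomingSum_edgeSigma fun _ _ => rfl)

variable [IsProbabilityMeasure μ]

theorem integral_incomingSum (hM : IsModel μ adj inv z p A y0) :
    ∫ ω, incomingSum adj A y0 a j ω ∂μ = z j * ∑ b ∈ (adj j).erase a, (2 * p b - 1) := by
  unfold incomingSum
  rw [integral_finsetSum _ fun b hb =>
      (hM.memLp_edgeTerm (Finset.mem_of_mem_erase hb)).integrable one_le_two, Finset.mul_sum]
  exact Finset.sum_congr rfl fun b hb => hM.integral_edgeTerm (Finset.mem_of_mem_erase hb)

theorem variance_incomingSum (hM : IsModel μ adj inv z p A y0) :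
    variance (incomingSum adj A y0 a j) μ = ∑ b ∈ (adj j).erase a, (2 - (2 * p b - 1) ^ 2) := by
  unfold incomingSum
  rw [← Finset.sum_fn,
    IndepFun.variance_sum fun b hb => hM.memLp_edgeTerm (Finset.mem_of_mem_erase hb)]
  · exact Finset.sum_congr rfl fun b hb => hM.variance_edgeTerm (Finset.mem_of_mem_erase hb)
  · intro b hb b' hb' hne
    exact hM.indepFun_of_disjoint (E := {(j, b)}) (E' := {(j, b')}) (by simpa using hne)
      (hM.measurable_edgeTerm_edgeSigma (Finset.mem_of_mem_erase hb) rfl)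
      (hM.measurable_edgeTerm_edgeSigma (Finset.mem_of_mem_erase hb') rfl)

theorem variance_questionTerm (hM : IsModel μ adj inv z p A y0) (ha : a ∈ adj j) :
    variance (questionTerm adj A y0 a j) μ
      = (∑ b ∈ (adj j).erase a, (2 - (2 * p b - 1) ^ 2))
        + (1 - (2 * p a - 1) ^ 2) * (∑ b ∈ (adj j).erase a, (2 * p b - 1)) ^ 2 := by
  have hindep : IndepFun (A j a) (incomingSum adj A y0 a j) μ :=
    hM.indepFun_of_disjoint (E := {e | e.2 = a}) disjoint_compl_right
      (measurable_answer_edgeSigma ha rfl)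
      (hM.measurable_incomingSum_edgeSigma fun _ hb => Finset.ne_of_mem_erase hb)
  unfold questionTerm
  rw [hindep.variance_mul_of_abs_eq_one
      (hM.measurable_answer j a ha).aestronglyMeasurable (hM.abs_answer ha) hM.memLp_incomingSum,
    hM.variance_incomingSum, hM.integral_incomingSum, hM.integral_answer ha, mul_pow, mul_pow,
    hM.sign_sq, one_mul, one_mul]

end IsModel

end Crowdsourcing

/-- Variance of the first-iteration user weight in the crowdsourcing model:
`Var(y¹_{a→i}) = Σ_{j ∈ ∂⁻¹a\{i}} [ Σ_{b ∈ ∂j\{a}} (2 - (2p_b - 1)²)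
  + (1 - (2p_a - 1)²)·(Σ_{b ∈ ∂j\{a}} (2p_b - 1))² ]`. -/
theorem first_iteration_weight_variance
    {Ω U Q : Type*} [MeasureSpace Ω] [IsProbabilityMeasure (ℙ : Measure Ω)]
    [DecidableEq U] [DecidableEq Q]
    (adj : Q → Finset U) (inv : U → Finset Q)
    (hbip : ∀ (a : U) (j : Q), a ∈ adj j ↔ j ∈ inv a)
    (z : Q → ℝ) (hz : ∀ j, z j = 1 ∨ z j = -1)
    (p : U → ℝ) (hp : ∀ b, p b ∈ Set.Icc (0 : ℝ) 1)
    (A : Q → U → Ω → ℝ) (y0 : U → Q → Ω → ℝ)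
    (hAmeas : ∀ j b, b ∈ adj j → Measurable (A j b))
    (hy0meas : ∀ b j, j ∈ inv b → Measurable (y0 b j))
    (hAval : ∀ j b, b ∈ adj j → ∀ ω, A j b ω = z j ∨ A j b ω = -z j)
    (hAdist : ∀ j b, b ∈ adj j → ℙ {ω | A j b ω = z j} = ENNReal.ofReal (p b))
    (hy0sq : ∀ b j, j ∈ inv b → MemLp (y0 b j) 2 ℙ)
    (hy0mean : ∀ b j, j ∈ inv b → ∫ ω, y0 b j ω = 1)
    (hy0var : ∀ b j, j ∈ inv b → variance (y0 b j) ℙ = 1)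
    (hindep : iIndepFun
      (Sum.elim (fun e : {x : Q × U // x.2 ∈ adj x.1} => A e.1.1 e.1.2)
                (fun e : {x : U × Q // x.2 ∈ inv x.1} => y0 e.1.1 e.1.2)) ℙ)
    (a : U) (i : Q) :
    variance (fun ω => ∑ j ∈ (inv a).erase i, ∑ b ∈ (adj j).erase a,
        A j a ω * A j b ω * y0 b j ω) ℙ
      = ∑ j ∈ (inv a).erase i,
          ((∑ b ∈ (adj j).erase a, (2 - (2 * p b - 1) ^ 2))
            + (1 - (2 * p a - 1) ^ 2) *
                (∑ b ∈ (adj j).erase a, (2 * p b - 1)) ^ 2) := by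
  have hM : Crowdsourcing.IsModel ℙ adj inv z p A y0 :=
    ⟨hbip, hz, fun b => (hp b).1, hAmeas, hy0meas, hAval, hAdist, hy0sq, hy0mean, hy0var, hindep⟩
  have hadj : ∀ j ∈ (inv a).erase i, a ∈ adj j :=
    fun j hj => (hbip a j).2 (Finset.mem_of_mem_erase hj)
  have hsum : (fun ω => ∑ j ∈ (inv a).erase i, ∑ b ∈ (adj j).erase a,
      A j a ω * A j b ω * y0 b j ω)
      = ∑ j ∈ (inv a).erase i, Crowdsourcing.questionTerm adj A y0 a j := by
    funext ω
    simp only [Finset.sum_apply, Crowdsourcing.questionTerm, Crowdsourcing.incomingSum,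
      Finset.mul_sum, mul_assoc]
  rw [hsum, IndepFun.variance_sum (fun j hj => hM.memLp_questionTerm (hadj j hj))
    fun j hj j' hj' hne => hM.indepFun_questionTerm (hadj j hj) (hadj j' hj') hne]
  exact Finset.sum_congr rfl fun j hj => hM.variance_questionTerm (hadj j hj)
end

section
/- In the degree-regular crowdsourcing model, if for every user a and every question j ∈ ∂⁻¹a the neighbor reliabilities satisfy (1/(r-1)) Σ_{b ∈ ∂j\{a}} (2p_b - 1) = m and (1/(r-1)) Σ_{b ∈ ∂j\{a}} (2p_b - 1)² = φ, then the variance of the first-iteration weight is Var(y^{(1)}_{a→i}) = (s-1)(r-1)·[ (2 - φ) + (1 - (2p_a - 1)²)·(r-1)·m² ] for every user a and question i ∈ ∂⁻¹a. -/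
/-!
The weight `y¹_{a→i}` is the sum over `j ∈ ∂⁻¹a \ {i}` of
`A_{ja} · Σ_{b ∈ ∂j \ {a}} A_{jb} y⁰_{b→j}`. Distinct questions involve disjoint sets of edges,
hence independent variables, so the variance splits over `j`. Everything else follows from one
identity: if `α² = 1` and `α` is independent of `T`, then `Var(αT) = Var T + (1 - (Eα)²)(ET)²`.
Applied to `A_{jb} y⁰_{b→j}` it gives the variance `2 - (2p_b - 1)²`; applied to `A_{ja}` and the
inner sum, whose terms are pairwise independent, it gives
`(r - 1)(2 - φ) + (1 - (2p_a - 1)²)(r - 1)²m²` for each question.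
-/

open MeasureTheory ProbabilityTheory

theorem Finset.sum_eq_card_mul_of_inv_card_mul_sum_eq {ι : Type*} {S : Finset ι} {f : ι → ℝ}
    {c : ℝ} (h : 1 / (S.card : ℝ) * ∑ b ∈ S, f b = c) : ∑ b ∈ S, f b = S.card * c := by
  rcases S.eq_empty_or_nonempty with rfl | hS
  · simp
  · rw [← h, ← mul_assoc, mul_one_div_cancel (by exact_mod_cast hS.card_ne_zero), one_mul]

section Moments

variable {Ω : Type*} {mΩ : MeasurableSpace Ω} {μ : Measure Ω}

theorem integral_eq_mul_two_mul_measureReal_sub_one [IsProbabilityMeasure μ] {X : Ω → ℝ}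
    {c : ℝ} (hX : Measurable X) (hval : ∀ ω, X ω = c ∨ X ω = -c) :
    μ[X] = c * (2 * μ.real {ω | X ω = c} - 1) := by
  set S := {ω | X ω = c}
  have hS : MeasurableSet S := hX (measurableSet_singleton c)
  have hX_eq : X = fun ω => S.indicator (fun _ => 2 * c) ω - c := by
    funext ω
    by_cases h : X ω = c
    · simp [S, h]; ring
    · simp [S, Set.indicator_of_notMem (show ω ∉ S from h), (hval ω).resolve_left h]
  rw [hX_eq, integral_sub ((integrable_const _).indicator hS) (integrable_const c),
    integral_indicator_const _ hS, integral_const, probReal_univ, smul_eq_mul, smul_eq_mul]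
  ring

theorem MeasureTheory.MemLp.mul_of_sq_eq_one {α T : Ω → ℝ} (hα : AEStronglyMeasurable α μ)
    (hα1 : ∀ ω, α ω ^ 2 = 1) (hT : MemLp T 2 μ) : MemLp (α * T) 2 μ :=
  hT.of_le (hα.mul hT.1) <| .of_forall fun ω => by
    have hα_abs : |α ω| = 1 :=
      (pow_eq_one_iff_of_nonneg (abs_nonneg _) two_ne_zero).1 (by rw [sq_abs, hα1])
    simp [hα_abs]

theorem ProbabilityTheory.IndepFun.variance_mul_of_sq_eq_one [IsProbabilityMeasure μ]
    {α T : Ω → ℝ} (hαT : α ⟂ᵢ[μ] T) (hα : AEStronglyMeasurable α μ)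
    (hα1 : ∀ ω, α ω ^ 2 = 1) (hT : MemLp T 2 μ) :
    Var[α * T; μ] = Var[T; μ] + (1 - μ[α] ^ 2) * μ[T] ^ 2 := by
  have hsq : (α * T) ^ 2 = T ^ 2 := by
    funext ω; simp only [Pi.mul_apply, Pi.pow_apply, mul_pow, hα1, one_mul]
  rw [variance_eq_sub (hT.mul_of_sq_eq_one hα hα1), variance_eq_sub hT, hsq,
    hαT.integral_mul_eq_mul_integral hα hT.1]
  ring

theorem variance_mul_sum_mul_of_indepFun [IsProbabilityMeasure μ] {ι : Type*}
    {S : Finset ι} {α : Ω → ℝ} {β η : ι → Ω → ℝ} (hα : AEStronglyMeasurable α μ)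
    (hα1 : ∀ ω, α ω ^ 2 = 1) (hβ : ∀ b ∈ S, AEStronglyMeasurable (β b) μ)
    (hβ1 : ∀ b ∈ S, ∀ ω, β b ω ^ 2 = 1)
    (hη : ∀ b ∈ S, MemLp (η b) 2 μ) (hβη : ∀ b ∈ S, β b ⟂ᵢ[μ] η b)
    (hpair : (S : Set ι).Pairwise fun b c => (β b * η b) ⟂ᵢ[μ] (β c * η c))
    (hαsum : α ⟂ᵢ[μ] ∑ b ∈ S, β b * η b) :
    Var[α * ∑ b ∈ S, β b * η b; μ] =
      ∑ b ∈ S, (Var[η b; μ] + (1 - μ[β b] ^ 2) * μ[η b] ^ 2) +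
        (1 - μ[α] ^ 2) * (∑ b ∈ S, μ[β b] * μ[η b]) ^ 2 := by
  have hW : ∀ b ∈ S, MemLp (β b * η b) 2 μ := fun b hb =>
    (hη b hb).mul_of_sq_eq_one (hβ b hb) (hβ1 b hb)
  have hmean : μ[∑ b ∈ S, β b * η b] = ∑ b ∈ S, μ[β b] * μ[η b] := by
    simp only [Finset.sum_apply]
    rw [integral_finsetSum S fun b hb => (hW b hb).integrable one_le_two]
    exact Finset.sum_congr rfl fun b hb =>
      (hβη b hb).integral_mul_eq_mul_integral (hβ b hb) (hη b hb).1
  rw [hαsum.variance_mul_of_sq_eq_one hα hα1 (memLp_finsetSum' S hW),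
    IndepFun.variance_sum hW hpair, hmean]
  congr 1
  exact Finset.sum_congr rfl fun b hb =>
    (hβη b hb).variance_mul_of_sq_eq_one (hβ b hb) (hβ1 b hb) (hη b hb)

end Moments

theorem ProbabilityTheory.iIndepFun.indepFun_of_measurable_biSup_s4 {Ω ι γ δ : Type*}
    {mΩ : MeasurableSpace Ω} {μ : Measure Ω} {β : ι → Type*} {mβ : ∀ k, MeasurableSpace (β k)}
    [MeasurableSpace γ] [MeasurableSpace δ]
    {f : ∀ k, Ω → β k} (hf : iIndepFun f μ) (hfm : ∀ k, Measurable (f k)) {S T : Set ι}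
    (hST : Disjoint S T) {X : Ω → γ} {Y : Ω → δ}
    (hX : Measurable[⨆ k ∈ S, (mβ k).comap (f k)] X)
    (hY : Measurable[⨆ k ∈ T, (mβ k).comap (f k)] Y) : X ⟂ᵢ[μ] Y := by
  rw [IndepFun_iff_Indep]
  exact indep_of_indep_of_le_right
    (indep_of_indep_of_le_left
      (indep_iSup_of_disjoint (fun k => (hfm k).comap_le) hf.iIndep hST) hX.comap_le)
    hY.comap_le

section Crowdsourcing

variable {Ω U Q : Type*} {adj : Q → Finset U} {inv : U → Finset Q}
  {A : Q → U → Ω → ℝ} {y0 : U → Q → Ω → ℝ}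

variable (adj inv) in
/-- Answers `A j b` are indexed by the edges `(j, b)` with `b ∈ adj j`, initial weights `y0 b j`
by the edges `(b, j)` with `j ∈ inv b`; both sit on the edge `(j, b) : Q × U`. -/
def edgeOf : {x : Q × U // x.2 ∈ adj x.1} ⊕ {x : U × Q // x.2 ∈ inv x.1} → Q × U :=
  Sum.elim Subtype.val fun e => e.1.swap

variable (adj inv A y0) in
def answersAndWeights :
    {x : Q × U // x.2 ∈ adj x.1} ⊕ {x : U × Q // x.2 ∈ inv x.1} → Ω → ℝ :=
  Sum.elim (fun e => A e.1.1 e.1.2) fun e => y0 e.1.1 e.1.2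

variable (adj inv A y0) in
abbrev edgeSigma (E : Set (Q × U)) : MeasurableSpace Ω :=
  ⨆ k ∈ edgeOf adj inv ⁻¹' E,
    MeasurableSpace.comap (answersAndWeights adj inv A y0 k) inferInstance

theorem measurable_answersAndWeights [MeasurableSpace Ω]
    (hAm : ∀ j b, b ∈ adj j → Measurable (A j b))
    (hy0m : ∀ b j, j ∈ inv b → Measurable (y0 b j)) :
    ∀ k, Measurable (answersAndWeights adj inv A y0 k)
  | .inl ⟨(j, b), h⟩ => hAm j b h
  | .inr ⟨(b, j), h⟩ => hy0m b j h

theorem measurable_edgeSigma_answer {E : Set (Q × U)} {j : Q} {b : U}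
    (hE : (j, b) ∈ E) (hb : b ∈ adj j) :
    Measurable[edgeSigma adj inv A y0 E] (A j b) :=
  Measurable.of_comap_le (le_iSup₂_of_le (Sum.inl ⟨(j, b), hb⟩) hE le_rfl)

theorem measurable_edgeSigma_weight {E : Set (Q × U)} {j : Q} {b : U}
    (hE : (j, b) ∈ E) (hj : j ∈ inv b) :
    Measurable[edgeSigma adj inv A y0 E] (y0 b j) :=
  Measurable.of_comap_le (le_iSup₂_of_le (Sum.inr ⟨(b, j), hj⟩) hE le_rfl)

theorem measurable_edgeSigma_answer_mul_weight {E : Set (Q × U)} {j : Q} {b : U}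
    (hE : (j, b) ∈ E) (hb : b ∈ adj j) (hj : j ∈ inv b) :
    Measurable[edgeSigma adj inv A y0 E] (A j b * y0 b j) :=
  (measurable_edgeSigma_answer hE hb).mul (measurable_edgeSigma_weight hE hj)

theorem measurable_edgeSigma_sum_answer_mul_weight (hbip : ∀ b j, b ∈ adj j ↔ j ∈ inv b)
    {E : Set (Q × U)} {j : Q} {S : Finset U} (hS : S ⊆ adj j) (hE : ∀ b ∈ S, (j, b) ∈ E) :
    Measurable[edgeSigma adj inv A y0 E] (∑ b ∈ S, A j b * y0 b j) := by
  rw [Finset.sum_fn]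
  exact Finset.measurable_sum S fun b hb =>
    measurable_edgeSigma_answer_mul_weight (hE b hb) (hS hb) ((hbip b j).1 (hS hb))

theorem indepFun_of_disjoint_edges [MeasurableSpace Ω] {μ : Measure Ω}
    (hindep : iIndepFun (answersAndWeights adj inv A y0) μ)
    (hAm : ∀ j b, b ∈ adj j → Measurable (A j b))
    (hy0m : ∀ b j, j ∈ inv b → Measurable (y0 b j))
    {E₁ E₂ : Set (Q × U)} (hE : Disjoint E₁ E₂) {X Y : Ω → ℝ}
    (hX : Measurable[edgeSigma adj inv A y0 E₁] X)
    (hY : Measurable[edgeSigma adj inv A y0 E₂] Y) :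
    X ⟂ᵢ[μ] Y :=
  hindep.indepFun_of_measurable_biSup_s4 (measurable_answersAndWeights hAm hy0m)
    (hE.preimage _) hX hY

theorem indepFun_answer_mul_weight [MeasurableSpace Ω] {μ : Measure Ω}
    (hindep : iIndepFun (answersAndWeights adj inv A y0) μ)
    (hAm : ∀ j b, b ∈ adj j → Measurable (A j b))
    (hy0m : ∀ b j, j ∈ inv b → Measurable (y0 b j)) {j : Q} {b c : U}
    (hb : b ∈ adj j) (hjb : j ∈ inv b) (hc : c ∈ adj j) (hjc : j ∈ inv c) (hbc : b ≠ c) :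
    (A j b * y0 b j) ⟂ᵢ[μ] (A j c * y0 c j) :=
  indepFun_of_disjoint_edges hindep hAm hy0m (Set.disjoint_singleton.2 (by simpa using hbc))
    (measurable_edgeSigma_answer_mul_weight rfl hb hjb)
    (measurable_edgeSigma_answer_mul_weight rfl hc hjc)

theorem indepFun_answer_sum_answer_mul_weight [MeasurableSpace Ω] {μ : Measure Ω} [DecidableEq U]
    (hindep : iIndepFun (answersAndWeights adj inv A y0) μ)
    (hbip : ∀ b j, b ∈ adj j ↔ j ∈ inv b)
    (hAm : ∀ j b, b ∈ adj j → Measurable (A j b))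
    (hy0m : ∀ b j, j ∈ inv b → Measurable (y0 b j)) {a : U} {j : Q} (ha : a ∈ adj j) :
    A j a ⟂ᵢ[μ] ∑ b ∈ (adj j).erase a, A j b * y0 b j :=
  indepFun_of_disjoint_edges hindep hAm hy0m (E₁ := {(j, a)}) disjoint_compl_right
    (measurable_edgeSigma_answer rfl ha)
    (measurable_edgeSigma_sum_answer_mul_weight hbip (Finset.erase_subset a _) fun b hb => by
      simp [Finset.ne_of_mem_erase hb])

variable (adj A y0) in
/-- The summand of question `j` in `y¹_{a→i}`. -/
def questionContribution [DecidableEq U] (a : U) (j : Q) : Ω → ℝ :=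
  A j a * ∑ b ∈ (adj j).erase a, A j b * y0 b j

theorem measurable_edgeSigma_questionContribution [DecidableEq U]
    (hbip : ∀ b j, b ∈ adj j ↔ j ∈ inv b) {E : Set (Q × U)} {a : U} {j : Q} (ha : a ∈ adj j)
    (hE : ∀ b, (j, b) ∈ E) :
    Measurable[edgeSigma adj inv A y0 E] (questionContribution adj A y0 a j) :=
  (measurable_edgeSigma_answer (hE a) ha).mul
    (measurable_edgeSigma_sum_answer_mul_weight hbip (Finset.erase_subset a _) fun b _ => hE b)

theorem indepFun_questionContribution [MeasurableSpace Ω] {μ : Measure Ω} [DecidableEq U]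
    (hindep : iIndepFun (answersAndWeights adj inv A y0) μ)
    (hbip : ∀ b j, b ∈ adj j ↔ j ∈ inv b)
    (hAm : ∀ j b, b ∈ adj j → Measurable (A j b))
    (hy0m : ∀ b j, j ∈ inv b → Measurable (y0 b j))
    {a : U} {j k : Q} (hj : a ∈ adj j) (hk : a ∈ adj k) (hjk : j ≠ k) :
    questionContribution adj A y0 a j ⟂ᵢ[μ] questionContribution adj A y0 a k :=
  indepFun_of_disjoint_edges hindep hAm hy0m
    (E₁ := {e | e.1 = j}) (E₂ := {e | e.1 = k})
    (Set.disjoint_left.2 fun _ h h' => hjk (h.symm.trans h'))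
    (measurable_edgeSigma_questionContribution hbip hj fun _ => rfl)
    (measurable_edgeSigma_questionContribution hbip hk fun _ => rfl)

theorem memLp_questionContribution [MeasurableSpace Ω] {μ : Measure Ω} [DecidableEq U]
    (hbip : ∀ b j, b ∈ adj j ↔ j ∈ inv b) (hAm : ∀ j b, b ∈ adj j → Measurable (A j b))
    (hA1 : ∀ j b, b ∈ adj j → ∀ ω, A j b ω ^ 2 = 1)
    (hy0sq : ∀ b j, j ∈ inv b → MemLp (y0 b j) 2 μ) {a : U} {j : Q} (ha : a ∈ adj j) :
    MemLp (questionContribution adj A y0 a j) 2 μ := by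
  refine MemLp.mul_of_sq_eq_one (hAm j a ha).aestronglyMeasurable (hA1 j a ha)
    (memLp_finsetSum' _ fun b hb => ?_)
  have hb : b ∈ adj j := Finset.mem_of_mem_erase hb
  exact (hy0sq b j ((hbip b j).1 hb)).mul_of_sq_eq_one (hAm j b hb).aestronglyMeasurable
    (hA1 j b hb)

theorem variance_questionContribution [MeasurableSpace Ω] {μ : Measure Ω}
    [IsProbabilityMeasure μ] [DecidableEq U]
    (hindep : iIndepFun (answersAndWeights adj inv A y0) μ)
    (hbip : ∀ b j, b ∈ adj j ↔ j ∈ inv b)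
    (hAm : ∀ j b, b ∈ adj j → Measurable (A j b))
    (hy0m : ∀ b j, j ∈ inv b → Measurable (y0 b j))
    (hA1 : ∀ j b, b ∈ adj j → ∀ ω, A j b ω ^ 2 = 1)
    (hy0sq : ∀ b j, j ∈ inv b → MemLp (y0 b j) 2 μ)
    (hy0mean : ∀ b j, j ∈ inv b → μ[y0 b j] = 1)
    (hy0var : ∀ b j, j ∈ inv b → Var[y0 b j; μ] = 1)
    {z : ℝ} (hz : z ^ 2 = 1) {p : U → ℝ} {a : U} {j : Q} (ha : a ∈ adj j)
    (hEA : ∀ b ∈ adj j, μ[A j b] = z * (2 * p b - 1)) :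
    Var[questionContribution adj A y0 a j; μ] =
      ∑ b ∈ (adj j).erase a, (2 - (2 * p b - 1) ^ 2) +
        (1 - (2 * p a - 1) ^ 2) * (∑ b ∈ (adj j).erase a, (2 * p b - 1)) ^ 2 := by
  have hS : (adj j).erase a ⊆ adj j := Finset.erase_subset a (adj j)
  have hinv : ∀ b ∈ (adj j).erase a, j ∈ inv b := fun b hb => (hbip b j).1 (hS hb)
  have hEA2 : ∀ b ∈ adj j, μ[A j b] ^ 2 = (2 * p b - 1) ^ 2 := fun b hb => by
    rw [hEA b hb, mul_pow, hz, one_mul]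
  rw [questionContribution, variance_mul_sum_mul_of_indepFun (hAm j a ha).aestronglyMeasurable
    (hA1 j a ha) (fun b hb => (hAm j b (hS hb)).aestronglyMeasurable)
    (fun b hb => hA1 j b (hS hb)) (fun b hb => hy0sq b j (hinv b hb))
    (fun b hb => hindep.indepFun (i := .inl ⟨(j, b), hS hb⟩) (j := .inr ⟨(b, j), hinv b hb⟩)
      Sum.inl_ne_inr)
    (fun b hb c hc => indepFun_answer_mul_weight hindep hAm hy0m (hS hb) (hinv b hb) (hS hc)
      (hinv c hc))
    (indepFun_answer_sum_answer_mul_weight hindep hbip hAm hy0m ha), hEA2 a ha]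
  congr 1
  · refine Finset.sum_congr rfl fun b hb => ?_
    rw [hy0var b j (hinv b hb), hy0mean b j (hinv b hb), hEA2 b (hS hb)]
    ring
  · rw [Finset.sum_congr rfl (g := fun b => z * (2 * p b - 1)) fun b hb => by
        rw [hy0mean b j (hinv b hb), mul_one, hEA b (hS hb)],
      ← Finset.mul_sum, mul_pow, hz, one_mul]

end Crowdsourcing

theorem first_iteration_weight_variance_regular_general
    {Ω U Q : Type*} [MeasureSpace Ω] [IsProbabilityMeasure (ℙ : Measure Ω)]
    [DecidableEq U] [DecidableEq Q]
    (adj : Q → Finset U) (inv : U → Finset Q)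
    (hbip : ∀ (a : U) (j : Q), a ∈ adj j ↔ j ∈ inv a)
    (r s : ℕ)
    (hadj : ∀ j : Q, (adj j).card = r) (hinv : ∀ a : U, (inv a).card = s)
    (z : Q → ℝ) (hz : ∀ j, z j = 1 ∨ z j = -1)
    (p : U → ℝ) (hp : ∀ b, p b ∈ Set.Icc (0 : ℝ) 1)
    (m φ : ℝ)
    (hm : ∀ (a : U) (j : Q), j ∈ inv a →
      (1 / ((r : ℝ) - 1)) * ∑ b ∈ (adj j).erase a, (2 * p b - 1) = m)
    (hφ : ∀ (a : U) (j : Q), j ∈ inv a →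
      (1 / ((r : ℝ) - 1)) * ∑ b ∈ (adj j).erase a, (2 * p b - 1) ^ 2 = φ)
    (A : Q → U → Ω → ℝ) (y0 : U → Q → Ω → ℝ)
    (hAmeas : ∀ j b, b ∈ adj j → Measurable (A j b))
    (hy0meas : ∀ b j, j ∈ inv b → Measurable (y0 b j))
    (hAval : ∀ j b, b ∈ adj j → ∀ ω, A j b ω = z j ∨ A j b ω = -z j)
    (hAdist : ∀ j b, b ∈ adj j → ℙ {ω | A j b ω = z j} = ENNReal.ofReal (p b))
    (hy0sq : ∀ b j, j ∈ inv b → MemLp (y0 b j) 2 ℙ)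
    (hy0mean : ∀ b j, j ∈ inv b → ∫ ω, y0 b j ω = 1)
    (hy0var : ∀ b j, j ∈ inv b → variance (y0 b j) ℙ = 1)
    (hindep : iIndepFun (m := fun _ => (inferInstance : MeasurableSpace ℝ))
      (Sum.elim (fun e : {x : Q × U // x.2 ∈ adj x.1} => A e.1.1 e.1.2)
                (fun e : {x : U × Q // x.2 ∈ inv x.1} => y0 e.1.1 e.1.2)) ℙ)
    (a : U) (i : Q) (hi : i ∈ inv a) :
    variance (fun ω => ∑ j ∈ (inv a).erase i, ∑ b ∈ (adj j).erase a,
        A j a ω * A j b ω * y0 b j ω) ℙ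
      = ((s : ℝ) - 1) * ((r : ℝ) - 1) *
          ((2 - φ) + (1 - (2 * p a - 1) ^ 2) * ((r : ℝ) - 1) * m ^ 2) := by
  have hz1 : ∀ j, z j ^ 2 = 1 := fun j => by rcases hz j with h | h <;> simp [h]
  have hA1 : ∀ j b, b ∈ adj j → ∀ ω, A j b ω ^ 2 = 1 := fun j b hb ω => by
    rcases hAval j b hb ω with h | h <;> simp [h, hz1]
  have hEA : ∀ j b, b ∈ adj j → ℙ[A j b] = z j * (2 * p b - 1) := fun j b hb => by
    rw [integral_eq_mul_two_mul_measureReal_sub_one (hAmeas j b hb) (hAval j b hb),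
      measureReal_def, hAdist j b hb, ENNReal.toReal_ofReal (hp b).1]
  have hsplit : (fun ω => ∑ j ∈ (inv a).erase i, ∑ b ∈ (adj j).erase a,
      A j a ω * A j b ω * y0 b j ω) =
        ∑ j ∈ (inv a).erase i, questionContribution adj A y0 a j := by
    funext ω
    simp only [questionContribution, Finset.sum_apply, Pi.mul_apply, Finset.mul_sum, mul_assoc]
  have ha : ∀ j ∈ (inv a).erase i, a ∈ adj j := fun j hj =>
    (hbip a j).2 (Finset.mem_of_mem_erase hj)
  have hvar : ∀ j ∈ (inv a).erase i, Var[questionContribution adj A y0 a j; ℙ] =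
      ((r : ℝ) - 1) * ((2 - φ) + (1 - (2 * p a - 1) ^ 2) * ((r : ℝ) - 1) * m ^ 2) := by
    intro j hj
    have hcard : (((adj j).erase a).card : ℝ) = r - 1 := by
      rw [Finset.cast_card_erase_of_mem (ha j hj), hadj]
    have hja := Finset.mem_of_mem_erase hj
    have hsum₁ := Finset.sum_eq_card_mul_of_inv_card_mul_sum_eq (hcard ▸ hm a j hja)
    have hsum₂ := Finset.sum_eq_card_mul_of_inv_card_mul_sum_eq (hcard ▸ hφ a j hja)
    rw [variance_questionContribution hindep hbip hAmeas hy0meas hA1 hy0sq hy0mean hy0var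
      (hz1 j) (ha j hj) (hEA j), Finset.sum_sub_distrib, Finset.sum_const, nsmul_eq_mul, hsum₁,
      hsum₂, hcard]
    ring
  rw [hsplit, IndepFun.variance_sum
    (fun j hj => memLp_questionContribution hbip hAmeas hA1 hy0sq (ha j hj))
    (fun j hj k hk => indepFun_questionContribution hindep hbip hAmeas hy0meas (ha j hj) (ha k hk)),
    Finset.sum_congr rfl hvar, Finset.sum_const, nsmul_eq_mul, Finset.cast_card_erase_of_mem hi,
    hinv]
  ring

/-- In the degree-regular crowdsourcing model, if for every user `a` and question
`j ∈ ∂⁻¹a` the neighbor reliabilities satisfy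
`(1/(r-1)) Σ_{b ∈ ∂j\{a}} (2p_b - 1) = m` and
`(1/(r-1)) Σ_{b ∈ ∂j\{a}} (2p_b - 1)² = φ`, then
`Var(y¹_{a→i}) = (s-1)(r-1)·[(2 - φ) + (1 - (2p_a - 1)²)·(r-1)·m²]`
for every edge `(a,i)`. -/
theorem first_iteration_weight_variance_regular
    {Ω U Q : Type*} [MeasureSpace Ω] [IsProbabilityMeasure (ℙ : Measure Ω)]
    [DecidableEq U] [DecidableEq Q]
    (adj : Q → Finset U) (inv : U → Finset Q)
    (hbip : ∀ (a : U) (j : Q), a ∈ adj j ↔ j ∈ inv a)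
    (r s : ℕ) (hr : 2 ≤ r) (hs : 2 ≤ s)
    (hadj : ∀ j : Q, (adj j).card = r) (hinv : ∀ a : U, (inv a).card = s)
    (z : Q → ℝ) (hz : ∀ j, z j = 1 ∨ z j = -1)
    (p : U → ℝ) (hp : ∀ b, p b ∈ Set.Icc (0 : ℝ) 1)
    (m φ : ℝ)
    (hm : ∀ (a : U) (j : Q), j ∈ inv a →
      (1 / ((r : ℝ) - 1)) * ∑ b ∈ (adj j).erase a, (2 * p b - 1) = m)
    (hφ : ∀ (a : U) (j : Q), j ∈ inv a →
      (1 / ((r : ℝ) - 1)) * ∑ b ∈ (adj j).erase a, (2 * p b - 1) ^ 2 = φ)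
    (A : Q → U → Ω → ℝ) (y0 : U → Q → Ω → ℝ)
    (hAmeas : ∀ j b, b ∈ adj j → Measurable (A j b))
    (hy0meas : ∀ b j, j ∈ inv b → Measurable (y0 b j))
    (hAval : ∀ j b, b ∈ adj j → ∀ ω, A j b ω = z j ∨ A j b ω = -z j)
    (hAdist : ∀ j b, b ∈ adj j → ℙ {ω | A j b ω = z j} = ENNReal.ofReal (p b))
    (hy0sq : ∀ b j, j ∈ inv b → MemLp (y0 b j) 2 ℙ)
    (hy0mean : ∀ b j, j ∈ inv b → ∫ ω, y0 b j ω = 1)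
    (hy0var : ∀ b j, j ∈ inv b → variance (y0 b j) ℙ = 1)
    (hindep : iIndepFun (m := fun _ => (inferInstance : MeasurableSpace ℝ))
      (Sum.elim (fun e : {x : Q × U // x.2 ∈ adj x.1} => A e.1.1 e.1.2)
                (fun e : {x : U × Q // x.2 ∈ inv x.1} => y0 e.1.1 e.1.2)) ℙ)
    (a : U) (i : Q) (hi : i ∈ inv a) :
    variance (fun ω => ∑ j ∈ (inv a).erase i, ∑ b ∈ (adj j).erase a,
        A j a ω * A j b ω * y0 b j ω) ℙ
      = ((s : ℝ) - 1) * ((r : ℝ) - 1) *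
          ((2 - φ) + (1 - (2 * p a - 1) ^ 2) * ((r : ℝ) - 1) * m ^ 2) :=
  first_iteration_weight_variance_regular_general adj inv hbip r s hadj hinv z hz p hp m φ hm hφ A
    y0 hAmeas hy0meas hAval hAdist hy0sq hy0mean hy0var hindep a i hi
end

section
/- For the i.i.d. meta-task iteration, the means satisfy the linear recursion E[ỹ^{(k)}_{a→i}] = (1/δ) · (2p_a - 1) · Σ_{j ∈ ∂⁻¹a^{(k)}\{i}} Σ_{b ∈ ∂j^{(k)}\{a}} (2p_b - 1) · E[ỹ^{(k-1)}_{b→j}], where δ = (s-1)(r-1). -/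
/-!
Each summand `A_{ja} A_{jb} ỹ_{b→j}` has `b ≠ a`, so its three factors are independent and its
mean factors as `E[A_{ja}] E[A_{jb}] E[ỹ_{b→j}]`. A `±z_j`-valued answer with
`P(A_{jb} = z_j) = p_b` has mean `z_j (2p_b - 1)`, and `z_j² = 1` removes the true answers.
Linearity of the expectation over the finite double sum gives the recursion.
-/

open MeasureTheory ProbabilityTheory

section

variable {Ω : Type*} [MeasurableSpace Ω] {μ : Measure Ω}

lemma integrable_of_eq_or_eq_neg [IsFiniteMeasure μ] {f : Ω → ℝ} {c : ℝ} (hf : Measurable f)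
    (hval : ∀ ω, f ω = c ∨ f ω = -c) : Integrable f μ :=
  .of_bound hf.aestronglyMeasurable |c|
    (ae_of_all _ fun ω => by rcases hval ω with h | h <;> simp [h])

lemma integral_eq_mul_of_eq_or_eq_neg [IsProbabilityMeasure μ] {f : Ω → ℝ} {c q : ℝ}
    (hf : Measurable f) (hval : ∀ ω, f ω = c ∨ f ω = -c) (hq : 0 ≤ q)
    (hdist : μ {ω | f ω = c} = ENNReal.ofReal q) :
    ∫ ω, f ω ∂μ = c * (2 * q - 1) := by
  set S := {ω | f ω = c}
  have hS : MeasurableSet S := hf (measurableSet_singleton c)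
  have hf_eq : f = fun ω => S.indicator (fun _ => 2 * c) ω - c := by
    funext ω
    by_cases hω : ω ∈ S
    · simp only [Set.indicator_of_mem hω]
      rw [show f ω = c from hω]
      ring
    · simp only [Set.indicator_of_notMem hω]
      rw [(hval ω).resolve_left hω]
      ring
  have hμS : μ.real S = q := by rw [measureReal_def, hdist, ENNReal.toReal_ofReal hq]
  rw [hf_eq, integral_sub ((integrable_const _).indicator hS) (integrable_const c),
    integral_indicator_const _ hS, integral_const, hμS]
  simp only [probReal_univ, smul_eq_mul, one_mul]
  ring

lemma integral_mul_mul_eq_of_indepFun {X Y W : Ω → ℝ} (hXY : IndepFun X Y μ)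
    (hXYW : IndepFun (X * Y) W μ) (hX : AEStronglyMeasurable X μ)
    (hY : AEStronglyMeasurable Y μ) (hW : AEStronglyMeasurable W μ) :
    ∫ ω, X ω * Y ω * W ω ∂μ = (∫ ω, X ω ∂μ) * (∫ ω, Y ω ∂μ) * ∫ ω, W ω ∂μ := by
  calc ∫ ω, X ω * Y ω * W ω ∂μ = (∫ ω, (X * Y) ω ∂μ) * ∫ ω, W ω ∂μ :=
        hXYW.integral_fun_mul_eq_mul_integral (hX.mul hY) hW
    _ = _ := by rw [hXY.integral_mul_eq_mul_integral hX hY]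

lemma indepFun_mul_eval_eval {ι κ : Type*} {X : ι → Ω → ℝ} {Y : κ → Ω → ℝ}
    (h : IndepFun (fun ω i => X i ω) (fun ω k => Y k ω) μ) (i₁ i₂ : ι) (k : κ) :
    IndepFun (X i₁ * X i₂) (Y k) μ :=
  h.comp ((measurable_pi_apply i₁).mul (measurable_pi_apply i₂)) (measurable_pi_apply k)

end

theorem meta_task_mean_recursion_general
    {Ω U Q : Type*} [MeasureSpace Ω] [IsProbabilityMeasure (ℙ : Measure Ω)]
    [DecidableEq U] [DecidableEq Q]
    (adj : Q → Finset U) (inv : U → Finset Q)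
    (hbip : ∀ (a : U) (j : Q), a ∈ adj j ↔ j ∈ inv a)
    (r s : ℕ)
    (z : Q → ℝ) (hz : ∀ j, z j = 1 ∨ z j = -1)
    (p : U → ℝ) (hp : ∀ b, p b ∈ Set.Icc (0 : ℝ) 1)
    (A : Q → U → Ω → ℝ) (yprev : U → Q → Ω → ℝ)
    (hAmeas : ∀ j b, b ∈ adj j → Measurable (A j b))
    (hAval : ∀ j b, b ∈ adj j → ∀ ω, A j b ω = z j ∨ A j b ω = -z j)
    (hAdist : ∀ j b, b ∈ adj j → ℙ {ω | A j b ω = z j} = ENNReal.ofReal (p b))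
    (hyint : ∀ b j, j ∈ inv b → Integrable (yprev b j) ℙ)
    (hAindep : iIndepFun (m := fun _ => (inferInstance : MeasurableSpace ℝ))
      (fun e : {x : Q × U // x.2 ∈ adj x.1} => A e.1.1 e.1.2) ℙ)
    (hAyindep : IndepFun
      (fun ω (e : {x : Q × U // x.2 ∈ adj x.1}) => A e.1.1 e.1.2 ω)
      (fun ω (e : {x : U × Q // x.2 ∈ inv x.1}) => yprev e.1.1 e.1.2 ω) ℙ)
    (a : U) (i : Q) :
    (∫ ω, (1 / (((s : ℝ) - 1) * ((r : ℝ) - 1))) *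
        ∑ j ∈ (inv a).erase i, ∑ b ∈ (adj j).erase a,
          A j a ω * A j b ω * yprev b j ω)
      = (1 / (((s : ℝ) - 1) * ((r : ℝ) - 1))) * (2 * p a - 1) *
          ∑ j ∈ (inv a).erase i, ∑ b ∈ (adj j).erase a,
            (2 * p b - 1) * ∫ ω, yprev b j ω := by
  have hAint : ∀ j b, b ∈ adj j → Integrable (A j b) ℙ := fun j b hb =>
    integrable_of_eq_or_eq_neg (hAmeas j b hb) (hAval j b hb)
  have hAmean : ∀ j b, b ∈ adj j → ∫ ω, A j b ω = z j * (2 * p b - 1) := fun j b hb =>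
    integral_eq_mul_of_eq_or_eq_neg (hAmeas j b hb) (hAval j b hb) (hp b).1 (hAdist j b hb)
  have hterm : ∀ j ∈ (inv a).erase i, ∀ b ∈ (adj j).erase a,
      Integrable (fun ω => A j a ω * A j b ω * yprev b j ω) ℙ ∧
        ∫ ω, A j a ω * A j b ω * yprev b j ω
          = (2 * p a - 1) * ((2 * p b - 1) * ∫ ω, yprev b j ω) := by
    intro j hj b hb
    have ha : a ∈ adj j := (hbip a j).2 (Finset.mem_of_mem_erase hj)
    have hb' : b ∈ adj j := Finset.mem_of_mem_erase hb
    have hy := hyint b j ((hbip b j).1 hb')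
    have hAA : IndepFun (A j a) (A j b) ℙ :=
      hAindep.indepFun (i := ⟨(j, a), ha⟩) (j := ⟨(j, b), hb'⟩)
        fun h => Finset.ne_of_mem_erase hb (congrArg (·.1.2) h).symm
    have hAAy : IndepFun (A j a * A j b) (yprev b j) ℙ :=
      indepFun_mul_eval_eval hAyindep ⟨(j, a), ha⟩ ⟨(j, b), hb'⟩
        ⟨(b, j), (hbip b j).1 hb'⟩
    refine ⟨hAAy.integrable_mul (hAA.integrable_mul (hAint j a ha) (hAint j b hb')) hy, ?_⟩
    rw [integral_mul_mul_eq_of_indepFun hAA hAAy (hAmeas j a ha).aestronglyMeasurable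
      (hAmeas j b hb').aestronglyMeasurable hy.aestronglyMeasurable, hAmean j a ha, hAmean j b hb']
    rcases hz j with h | h <;> rw [h] <;> ring
  rw [integral_const_mul, integral_finsetSum _
    fun j hj => integrable_finsetSum _ fun b hb => (hterm j hj b hb).1, mul_assoc]
  congr 1
  rw [Finset.mul_sum]
  refine Finset.sum_congr rfl fun j hj => ?_
  rw [integral_finsetSum _ fun b hb => (hterm j hj b hb).1, Finset.mul_sum]
  exact Finset.sum_congr rfl fun b hb => (hterm j hj b hb).2

/-- Recursion for the mean weights over a fresh (i.i.d.) meta-task: with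
`δ = (s-1)(r-1)`, mutually independent answers `A^{(k)}` that are independent of the
previous weights `ỹ^{(k-1)}`, the updated weight
`ỹ^{(k)}_{a→i} = (1/δ) Σ_{j ∈ ∂⁻¹a^{(k)}\{i}} Σ_{b ∈ ∂j^{(k)}\{a}} A^{(k)}_{ja} A^{(k)}_{jb} ỹ^{(k-1)}_{b→j}`
has mean
`E[ỹ^{(k)}_{a→i}] = (1/δ)(2p_a - 1) Σ_{j ∈ ∂⁻¹a^{(k)}\{i}} Σ_{b ∈ ∂j^{(k)}\{a}} (2p_b - 1)·E[ỹ^{(k-1)}_{b→j}]`. -/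
theorem meta_task_mean_recursion
    {Ω U Q : Type*} [MeasureSpace Ω] [IsProbabilityMeasure (ℙ : Measure Ω)]
    [DecidableEq U] [DecidableEq Q]
    (adj : Q → Finset U) (inv : U → Finset Q)
    (hbip : ∀ (a : U) (j : Q), a ∈ adj j ↔ j ∈ inv a)
    (r s : ℕ) (hr : 2 ≤ r) (hs : 2 ≤ s)
    (hadj : ∀ j : Q, (adj j).card = r) (hinv : ∀ a : U, (inv a).card = s)
    (z : Q → ℝ) (hz : ∀ j, z j = 1 ∨ z j = -1)
    (p : U → ℝ) (hp : ∀ b, p b ∈ Set.Icc (0 : ℝ) 1)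
    (A : Q → U → Ω → ℝ) (yprev : U → Q → Ω → ℝ)
    (hAmeas : ∀ j b, b ∈ adj j → Measurable (A j b))
    (hymeas : ∀ b j, j ∈ inv b → Measurable (yprev b j))
    (hAval : ∀ j b, b ∈ adj j → ∀ ω, A j b ω = z j ∨ A j b ω = -z j)
    (hAdist : ∀ j b, b ∈ adj j → ℙ {ω | A j b ω = z j} = ENNReal.ofReal (p b))
    (hyint : ∀ b j, j ∈ inv b → Integrable (yprev b j) ℙ)
    (hAindep : iIndepFun (m := fun _ => (inferInstance : MeasurableSpace ℝ))
      (fun e : {x : Q × U // x.2 ∈ adj x.1} => A e.1.1 e.1.2) ℙ)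
    (hAyindep : IndepFun
      (fun ω (e : {x : Q × U // x.2 ∈ adj x.1}) => A e.1.1 e.1.2 ω)
      (fun ω (e : {x : U × Q // x.2 ∈ inv x.1}) => yprev e.1.1 e.1.2 ω) ℙ)
    (a : U) (i : Q) :
    (∫ ω, (1 / (((s : ℝ) - 1) * ((r : ℝ) - 1))) *
        ∑ j ∈ (inv a).erase i, ∑ b ∈ (adj j).erase a,
          A j a ω * A j b ω * yprev b j ω)
      = (1 / (((s : ℝ) - 1) * ((r : ℝ) - 1))) * (2 * p a - 1) *
          ∑ j ∈ (inv a).erase i, ∑ b ∈ (adj j).erase a,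
            (2 * p b - 1) * ∫ ω, yprev b j ω :=
  meta_task_mean_recursion_general adj inv hbip r s z hz p hp A yprev hAmeas hAval hAdist hyint
    hAindep hAyindep a i
end
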